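/- Let ς be a marginally future-trapped round sphere (θ⁺ = 0, θ⁻ < 0) in a spherically symmetric spacetime, and consider the first variation of θ⁺ along f·n with n = −ℓ + (g(n,n)/2)k, g(k,n) = 1: δ_{fn}θ⁺ = −Δ_ς f + f(1/r² − G_{μν}k^μℓ^ν − (n_ρn^ρ/2)G_{μν}k^μk^ν). If G_{μν}k^μk^ν|_ς ≠ 0 then, choosing f = a₀ + a_N P_N(cosθ) with a₀ > 0 and n_ρn^ρ = (2/G_{μν}k^μk^ν)((1+N(N+1))/r² − G_{μν}k^μℓ^ν), one obtains δ_{fn}θ⁺ = −a₀ N(N+1)/r_ς² < 0; moreover if a_N < −a₀ < 0 then f changes sign on ς. Hence the deformed surface is future-trapped and crosses to both sides of the horizon. -/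
import Mathlib


noncomputable section

/-- The N-th Legendre polynomial, via the Rodrigues formula. -/
def legendreP (N : ℕ) (x : ℝ) : ℝ :=
  (1 / (2^N * (N.factorial : ℝ))) * iteratedDeriv N (fun y => (y^2 - 1)^N) x

open Polynomial

lemma iteratedDeriv_polyeval (p : ℝ[X]) (n : ℕ) :
    iteratedDeriv n (fun y => p.eval y) = fun x => (derivative^[n] p).eval x := by
  induction n with
  | zero => simp [iteratedDeriv_zero]
  | succ n ih =>
    rw [iteratedDeriv_succ, ih, Function.iterate_succ_apply']
    ext x
    exact Polynomial.deriv (p := derivative^[n] p)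

lemma rodrigues_poly (N : ℕ) :
    ((X : ℝ[X])^2 - 1)^N = (X - C 1)^N * (X + C 1)^N := by
  rw [← mul_pow]; congr 1; simp only [map_one]; ring

lemma fun_eq_eval (N : ℕ) :
    (fun y : ℝ => (y^2 - 1)^N) = fun y => (((X : ℝ[X])^2 - 1)^N).eval y := by
  funext y; simp

lemma legendreP_eq (N : ℕ) (x : ℝ) :
    legendreP N x = (1 / (2^N * (N.factorial : ℝ))) *
      (derivative^[N] (((X : ℝ[X])^2 - 1)^N)).eval x := by
  rw [legendreP, fun_eq_eval, iteratedDeriv_polyeval]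

lemma legendreP_one (N : ℕ) : legendreP N 1 = 1 := by
  rw [legendreP_eq, rodrigues_poly, iterate_derivative_mul, eval_finset_sum]
  rw [Finset.sum_eq_single_of_mem 0 (Finset.mem_range.mpr N.succ_pos)]
  · rw [N.choose_zero_right, one_smul, eval_mul, N.sub_zero,
      iterate_derivative_X_sub_pow_self, Function.iterate_zero_apply]
    have h2 : ((2:ℝ)^N) ≠ 0 := by positivity
    have hf : ((N.factorial : ℝ)) ≠ 0 := Nat.cast_ne_zero.mpr N.factorial_ne_zero
    simp only [eval_mul, eval_natCast, eval_pow, eval_add, eval_X, eval_C]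
    norm_num
    field_simp
  · intro b hb hb0
    rw [iterate_derivative_X_sub_pow, Nat.sub_sub_self (Finset.mem_range_succ_iff.mp hb)]
    simp [zero_pow hb0]

lemma legendreP_exists_zero (N : ℕ) (hN : 1 ≤ N) :
    ∃ x ∈ Set.Ioo (-1 : ℝ) 1, legendreP N x = 0 := by
  set p : ℝ[X] := ((X : ℝ[X])^2 - 1)^N with hp
  set q : ℝ[X] := derivative^[N - 1] p with hq
  have hroot : ∀ c : ℝ, ((X : ℝ[X]) - C c)^N ∣ p → q.eval c = 0 := by
    intro c hdvd
    have h1 : ((X : ℝ[X]) - C c) ^ (N - (N - 1)) ∣ q :=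
      pow_sub_dvd_iterate_derivative_of_pow_dvd (N - 1) hdvd
    have h2 : N - (N - 1) = 1 := by omega
    rw [h2, pow_one] at h1
    obtain ⟨r, hr⟩ := h1
    simp [hr]
  have hd1 : ((X : ℝ[X]) - C 1)^N ∣ p := by
    rw [hp, rodrigues_poly]; exact dvd_mul_right _ _
  have hdm1 : ((X : ℝ[X]) - C (-1))^N ∣ p := by
    have hx : ((X : ℝ[X]) - C (-1))^N = (X + C 1)^N := by
      congr 1; simp [sub_eq_add_neg]
    rw [hx, hp, rodrigues_poly]
    exact dvd_mul_left _ _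
  have hRolle : ∃ c ∈ Set.Ioo (-1 : ℝ) 1, deriv (fun x => q.eval x) c = 0 := by
    refine exists_deriv_eq_zero (by norm_num) (q.continuous_aeval.continuousOn.congr ?_) ?_
    · intro x _; simp
    · rw [hroot 1 hd1, hroot (-1) hdm1]
  obtain ⟨c, hc, hc0⟩ := hRolle
  refine ⟨c, hc, ?_⟩
  rw [legendreP_eq]
  have hz : (derivative^[N] p).eval c = 0 := by
    have hN1 : N = (N - 1) + 1 := by omega
    rw [hN1, Function.iterate_succ_apply', ← hq, ← Polynomial.deriv, hc0]
  rw [hz, mul_zero]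

/-- Let ς be a marginally trapped round sphere of radius r_ς with
G_{μν}k^μk^ν|_ς ≠ 0.  For the deformation f·n with f = a₀ + a_N P_N(cosθ) (a₀ > 0) and
n_ρn^ρ = (2/G_{μν}k^μk^ν)((1+N(N+1))/r_ς² − G_{μν}k^μℓ^ν), the variation
δ_{fn}θ⁺ = −Δ_ς f + f(1/r_ς² − G_{μν}k^μℓ^ν − (n_ρn^ρ/2)G_{μν}k^μk^ν)
(using Δ_ς P_N(cosθ) = −(N(N+1)/r_ς²)P_N(cosθ), Δ_ς a₀ = 0) equals the negative
constant −a₀N(N+1)/r_ς²; moreover if a_N < −a₀ < 0 then f changes sign on ς.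
Hence the deformed surface is future-trapped and crosses both sides of the horizon. -/
theorem perturbed_MOTS_is_trapped_and_crosses
    (rς : ℝ) (hς : 0 < rς)
    (Gkk Gkl : ℝ) (hGkk : Gkk ≠ 0)       -- G_{μν}k^μk^ν ≠ 0 and G_{μν}k^μℓ^ν on ς
    (N : ℕ) (hN : 1 ≤ N)
    (a₀ aN : ℝ) (ha₀ : 0 < a₀) :
    let nn := (2/Gkk) * ((1 + (N:ℝ)*(N+1))/rς^2 - Gkl)      -- n_ρn^ρ
    let f : ℝ → ℝ := fun θ => a₀ + aN * legendreP N (Real.cos θ)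
    let lapf : ℝ → ℝ := fun θ => aN * (-((N:ℝ)*(N+1)/rς^2)) * legendreP N (Real.cos θ)
    let δθp : ℝ → ℝ := fun θ => -lapf θ + f θ * (1/rς^2 - Gkl - (nn/2) * Gkk)
    (∀ θ : ℝ, δθp θ = -(a₀ * (N:ℝ)*(N+1)/rς^2)) ∧
    -(a₀ * (N:ℝ)*(N+1)/rς^2) < 0 ∧
    (aN < -a₀ → (f 0 < 0 ∧ ∃ θ : ℝ, 0 < f θ)) := by
  intro nn f lapf δθp
  have hr : rς ≠ 0 := ne_of_gt hς
  refine ⟨?_, ?_, ?_⟩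
  · intro θ
    show -lapf θ + f θ * (1/rς^2 - Gkl - (nn/2) * Gkk) = -(a₀ * (N:ℝ)*(N+1)/rς^2)
    simp only [nn, f, lapf]
    field_simp
    ring
  · have hNpos : (0:ℝ) < (N:ℝ) := by exact_mod_cast Nat.lt_of_lt_of_le Nat.zero_lt_one hN
    have : 0 < a₀ * (N:ℝ)*(N+1)/rς^2 := by positivity
    linarith
  · intro haN
    constructor
    · show a₀ + aN * legendreP N (Real.cos 0) < 0
      rw [Real.cos_zero, legendreP_one, mul_one]
      linarith
    · obtain ⟨x, hx, hx0⟩ := legendreP_exists_zero N hN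
      refine ⟨Real.arccos x, ?_⟩
      show 0 < a₀ + aN * legendreP N (Real.cos (Real.arccos x))
      rw [Real.cos_arccos (le_of_lt hx.1) (le_of_lt hx.2), hx0, mul_zero, add_zero]
      exact ha₀
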